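/- (Persistence of the eigenfunction equation along the Lax flow.) Let u : ℝ × ℝ → ℝ be smooth, let τ ∈ ℝ, and let φ : ℝ × ℝ → ℝ be smooth and satisfy ∂ₜφ = −4 P(t)φ, where P(t)φ := ∂ₓ³φ + (3/4)( ∂ₓ(u φ) + u ∂ₓφ ). Define w(t,x) := ∂ₓ²φ(t,x) + u(t,x)φ(t,x) − τ φ(t,x). Then at every (t,x), ∂ₜw + 4( ∂ₓ³w + (3/4)( ∂ₓ(u w) + u ∂ₓw ) ) = ( ∂ₜu + ∂ₓ³u + 6 u ∂ₓu ) · φ. In particular, if u solves the KdV equation ∂ₜu + ∂ₓ³u + 6u∂ₓu = 0, then w satisfies the same evolution equation ∂ₜw = −4P(t)w as φ, so the generalized eigenfunction equation L(t)φ = τφ is propagated by the flow. -/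

import Mathlib

noncomputable def pd (v : ℝ × ℝ) (F : ℝ × ℝ → ℝ) : ℝ × ℝ → ℝ := fun p => fderiv ℝ F p v

lemma contDiff_pd (v : ℝ × ℝ) {F : ℝ × ℝ → ℝ} (hF : ContDiff ℝ (⊤ : ℕ∞) F) :
    ContDiff ℝ (⊤ : ℕ∞) (pd v F) := by
  have h1 : ContDiff ℝ (⊤ : ℕ∞) (fderiv ℝ F) := hF.fderiv_right (by simp)
  exact (ContinuousLinearMap.apply ℝ ℝ v).contDiff.comp h1

lemma pd_add {F G : ℝ × ℝ → ℝ} (hF : Differentiable ℝ F) (hG : Differentiable ℝ G)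
    (v p) : pd v (fun q => F q + G q) p = pd v F p + pd v G p := by
  simp [pd, fderiv_fun_add (hF p) (hG p)]

lemma pd_sub {F G : ℝ × ℝ → ℝ} (hF : Differentiable ℝ F) (hG : Differentiable ℝ G)
    (v p) : pd v (fun q => F q - G q) p = pd v F p - pd v G p := by
  simp [pd, fderiv_fun_sub (hF p) (hG p)]

lemma pd_mul {F G : ℝ × ℝ → ℝ} (hF : Differentiable ℝ F) (hG : Differentiable ℝ G)
    (v p) : pd v (fun q => F q * G q) p = pd v F p * G p + F p * pd v G p := by
  simp [pd, fderiv_fun_mul (hF p) (hG p)]; ring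

lemma pd_const_mul {F : ℝ × ℝ → ℝ} (hF : Differentiable ℝ F) (c : ℝ)
    (v p) : pd v (fun q => c * F q) p = c * pd v F p := by
  simp [pd, fderiv_const_mul (hF p) c]

lemma pd_comm {F : ℝ × ℝ → ℝ} (hF : ContDiff ℝ (⊤ : ℕ∞) F) (v w p) :
    pd v (pd w F) p = pd w (pd v F) p := by
  have hd : ∀ y, HasFDerivAt F (fderiv ℝ F y) y := fun y =>
    (hF.differentiable (by simp) y).hasFDerivAt
  have h1 : ContDiff ℝ (⊤ : ℕ∞) (fderiv ℝ F) := hF.fderiv_right (by simp)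
  have h2 : HasFDerivAt (fderiv ℝ F) (fderiv ℝ (fderiv ℝ F) p) p :=
    (h1.differentiable (by simp) p).hasFDerivAt
  have key : ∀ a b : ℝ × ℝ, pd a (pd b F) p = fderiv ℝ (fderiv ℝ F) p a b := by
    intro a b
    have h3 : HasFDerivAt (fun q => fderiv ℝ F q b)
        ((ContinuousLinearMap.apply ℝ ℝ b).comp (fderiv ℝ (fderiv ℝ F) p)) p :=
      (ContinuousLinearMap.apply ℝ ℝ b).hasFDerivAt.comp p h2
    show fderiv ℝ (fun q => fderiv ℝ F q b) p a = _
    rw [h3.fderiv]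
    rfl
  rw [key, key, second_derivative_symmetric hd h2 v w]

lemma deriv_x {F : ℝ × ℝ → ℝ} (hF : ContDiff ℝ (⊤ : ℕ∞) F) (t x : ℝ) :
    deriv (fun y => F (t, y)) x = pd (0, 1) F (t, x) := by
  have hin : HasFDerivAt (fun y : ℝ => (t, y))
      (((0 : ℝ →L[ℝ] ℝ)).prod (ContinuousLinearMap.id ℝ ℝ)) x :=
    HasFDerivAt.prodMk (hasFDerivAt_const t x) (hasFDerivAt_id x)
  have := ((hF.differentiable (by simp) (t, x)).hasFDerivAt.comp x hin).hasDerivAt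
  simpa [pd, Function.comp_def] using this.deriv

lemma deriv_t {F : ℝ × ℝ → ℝ} (hF : ContDiff ℝ (⊤ : ℕ∞) F) (t x : ℝ) :
    deriv (fun s => F (s, x)) t = pd (1, 0) F (t, x) := by
  have hin : HasFDerivAt (fun s : ℝ => (s, x))
      ((ContinuousLinearMap.id ℝ ℝ).prod (0 : ℝ →L[ℝ] ℝ)) t :=
    HasFDerivAt.prodMk (hasFDerivAt_id t) (hasFDerivAt_const x t)
  have := ((hF.differentiable (by simp) (t, x)).hasFDerivAt.comp t hin).hasDerivAt
  simpa [pd, Function.comp_def] using this.deriv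

lemma contDiff_pd_iterate (n : ℕ) {F : ℝ × ℝ → ℝ} (hF : ContDiff ℝ (⊤ : ℕ∞) F) :
    ContDiff ℝ (⊤ : ℕ∞) ((pd (0, 1))^[n] F) := by
  induction n with
  | zero => exact hF
  | succ n ih => rw [Function.iterate_succ_apply']; exact contDiff_pd _ ih

lemma iteratedDeriv_x {F : ℝ × ℝ → ℝ} (hF : ContDiff ℝ (⊤ : ℕ∞) F) (n : ℕ) (t x : ℝ) :
    iteratedDeriv n (fun y => F (t, y)) x = (pd (0, 1))^[n] F (t, x) := by
  induction n generalizing x with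
  | zero => simp
  | succ n ih =>
    rw [iteratedDeriv_succ]
    have hfun : iteratedDeriv n (fun y => F (t, y)) = fun y => (pd (0, 1))^[n] F (t, y) :=
      funext fun y => ih y
    rw [hfun, deriv_x (contDiff_pd_iterate n hF) t x, Function.iterate_succ_apply']

local notation "dX" => pd ((0, 1) : ℝ × ℝ)
local notation "dT" => pd ((1, 0) : ℝ × ℝ)

lemma key {U Φ : ℝ × ℝ → ℝ} (hU : ContDiff ℝ (⊤ : ℕ∞) U) (hΦ : ContDiff ℝ (⊤ : ℕ∞) Φ) (τ : ℝ)
    (hfl : dT Φ = fun q => -4 * dX (dX (dX Φ)) q - 3 * (dX U q * Φ q) - 6 * (U q * dX Φ q))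
    (q : ℝ × ℝ) :
    dT (fun r => dX (dX Φ) r + U r * Φ r - τ * Φ r) q
      + 4 * (dX (dX (dX (fun r => dX (dX Φ) r + U r * Φ r - τ * Φ r))) q
        + 3 / 4 * (dX (fun r => U r * (dX (dX Φ) r + U r * Φ r - τ * Φ r)) q
          + U q * dX (fun r => dX (dX Φ) r + U r * Φ r - τ * Φ r) q)) =
    (dT U q + dX (dX (dX U)) q + 6 * U q * dX U q) * Φ q := by
  have c0 : ContDiff ℝ (⊤ : ℕ∞) Φ := hΦ
  have c1 := contDiff_pd ((0, 1) : ℝ × ℝ) c0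
  have c2 := contDiff_pd ((0, 1) : ℝ × ℝ) c1
  have c3 := contDiff_pd ((0, 1) : ℝ × ℝ) c2
  have c4 := contDiff_pd ((0, 1) : ℝ × ℝ) c3
  have e0c : ContDiff ℝ (⊤ : ℕ∞) U := hU
  have e1c := contDiff_pd ((0, 1) : ℝ × ℝ) e0c
  have e2c := contDiff_pd ((0, 1) : ℝ × ℝ) e1c
  have d0 := c0.differentiable (by simp)
  have d1 := c1.differentiable (by simp)
  have d2 := c2.differentiable (by simp)
  have d3 := c3.differentiable (by simp)
  have d4 := c4.differentiable (by simp)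
  have e0 := e0c.differentiable (by simp)
  have e1 := e1c.differentiable (by simp)
  have e2 := e2c.differentiable (by simp)
  set W : ℝ × ℝ → ℝ := fun r => dX (dX Φ) r + U r * Φ r - τ * Φ r with hW
  have cW : ContDiff ℝ (⊤ : ℕ∞) W := (c2.add (hU.mul c0)).sub (contDiff_const.mul c0)
  have dWd := cW.differentiable (by simp)
  -- x-derivatives of W
  have hW1 : dX W = fun r => dX (dX (dX Φ)) r + dX U r * Φ r + U r * dX Φ r - τ * dX Φ r := by
    funext r
    rw [hW, pd_sub (by fun_prop) (by fun_prop), pd_add (by fun_prop) (by fun_prop),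
        pd_mul (by fun_prop) (by fun_prop), pd_const_mul (by fun_prop)]
    ring
  have cW1 : ContDiff ℝ (⊤ : ℕ∞) (dX W) := contDiff_pd _ cW
  have hW2 : dX (dX W) = fun r => dX (dX (dX (dX Φ))) r + dX (dX U) r * Φ r
      + 2 * (dX U r * dX Φ r) + U r * dX (dX Φ) r - τ * dX (dX Φ) r := by
    funext r
    rw [hW1, pd_sub (by fun_prop) (by fun_prop), pd_add (by fun_prop) (by fun_prop),
        pd_add (by fun_prop) (by fun_prop), pd_mul (by fun_prop) (by fun_prop),
        pd_mul (by fun_prop) (by fun_prop), pd_const_mul (by fun_prop)]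
    ring
  have hW3 : dX (dX (dX W)) q = dX (dX (dX (dX (dX Φ)))) q + dX (dX (dX U)) q * Φ q
      + 3 * (dX (dX U) q * dX Φ q) + 3 * (dX U q * dX (dX Φ) q) + U q * dX (dX (dX Φ)) q
      - τ * dX (dX (dX Φ)) q := by
    rw [hW2, pd_sub (by fun_prop) (by fun_prop), pd_add (by fun_prop) (by fun_prop),
        pd_add (by fun_prop) (by fun_prop), pd_add (by fun_prop) (by fun_prop),
        pd_mul (by fun_prop) (by fun_prop), pd_const_mul (by fun_prop),
        pd_mul (by fun_prop) (by fun_prop), pd_mul (by fun_prop) (by fun_prop),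
        pd_const_mul (by fun_prop)]
    ring
  -- time derivative of W
  have hWt : dT W q = dT (dX (dX Φ)) q + dT U q * Φ q + U q * dT Φ q - τ * dT Φ q := by
    rw [hW, pd_sub (by fun_prop) (by fun_prop), pd_add (by fun_prop) (by fun_prop),
        pd_mul (by fun_prop) (by fun_prop), pd_const_mul (by fun_prop)]
    ring
  -- commute t and x derivatives
  have hswap1 : dT (dX Φ) = dX (dT Φ) := funext fun r => pd_comm hΦ _ _ r
  have hswap2 : dT (dX (dX Φ)) q = dX (dX (dT Φ)) q := by
    rw [pd_comm c1 ((1, 0) : ℝ × ℝ) ((0, 1) : ℝ × ℝ) q, hswap1]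
  -- x-derivatives of the flow right-hand side
  have hT1 : dX (fun r => -4 * dX (dX (dX Φ)) r - 3 * (dX U r * Φ r) - 6 * (U r * dX Φ r))
      = fun r => -4 * dX (dX (dX (dX Φ))) r - 3 * (dX (dX U) r * Φ r)
        - 9 * (dX U r * dX Φ r) - 6 * (U r * dX (dX Φ) r) := by
    funext r
    rw [pd_sub (by fun_prop) (by fun_prop), pd_sub (by fun_prop) (by fun_prop),
        pd_const_mul (by fun_prop), pd_const_mul (by fun_prop), pd_const_mul (by fun_prop),
        pd_mul (by fun_prop) (by fun_prop), pd_mul (by fun_prop) (by fun_prop)]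
    ring
  have hT2 : dX (dX (dT Φ)) q = -4 * dX (dX (dX (dX (dX Φ)))) q - 3 * (dX (dX (dX U)) q * Φ q)
      - 12 * (dX (dX U) q * dX Φ q) - 15 * (dX U q * dX (dX Φ) q)
      - 6 * (U q * dX (dX (dX Φ)) q) := by
    rw [hfl, hT1, pd_sub (by fun_prop) (by fun_prop), pd_sub (by fun_prop) (by fun_prop),
        pd_sub (by fun_prop) (by fun_prop), pd_const_mul (by fun_prop),
        pd_const_mul (by fun_prop), pd_const_mul (by fun_prop), pd_const_mul (by fun_prop),
        pd_mul (by fun_prop) (by fun_prop), pd_mul (by fun_prop) (by fun_prop),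
        pd_mul (by fun_prop) (by fun_prop)]
    ring
  -- the mixed product term
  have hUB : (fun r => U r * (dX (dX Φ) r + U r * Φ r - τ * Φ r)) = fun r => U r * W r := by
    funext r; rw [hW]
  have hUW : dX (fun r => U r * W r) q = dX U q * W q + U q * dX W q :=
    pd_mul e0 dWd _ q
  have hflq := congrFun hfl q
  have hW1q := congrFun hW1 q
  have hWq : W q = dX (dX Φ) q + U q * Φ q - τ * Φ q := congrFun hW q
  rw [hWt, hswap2, hT2, hW3, hUB, hUW, hW1q, hWq, hflq]
  ring



/-- The time-dependent Lax operator `P(t) = ∂ₓ³ + (3/4)(∂ₓ∘u(t,·) + u(t,·)∘∂ₓ)`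
associated to a time-dependent potential `u`. -/
noncomputable def LaxPt (u : ℝ → ℝ → ℝ) (t : ℝ) (g : ℝ → ℝ) : ℝ → ℝ :=
  fun x => iteratedDeriv 3 g x + (3 / 4) * (deriv (fun y => u t y * g y) x + u t x * deriv g x)

/-- The eigenfunction defect `w = L(t)φ - τφ = ∂ₓ²φ + uφ - τφ`. -/
noncomputable def laxDefect (u φ : ℝ → ℝ → ℝ) (τ : ℝ) (t x : ℝ) : ℝ :=
  iteratedDeriv 2 (fun y => φ t y) x + u t x * φ t x - τ * φ t x


/-- The defect as a function on the plane, in `pd` language. -/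
noncomputable def Wfn (u φ : ℝ → ℝ → ℝ) (τ : ℝ) : ℝ × ℝ → ℝ :=
  fun r => pd ((0, 1) : ℝ × ℝ) (pd ((0, 1) : ℝ × ℝ) (fun q : ℝ × ℝ => φ q.1 q.2)) r
    + u r.1 r.2 * φ r.1 r.2 - τ * φ r.1 r.2

/-- Persistence of the eigenfunction equation along the Lax flow: if `φ` evolves by
`∂ₜφ = -4P(t)φ`, then the defect `w = L(t)φ - τφ` satisfies
`∂ₜw + 4P(t)w = (∂ₜu + ∂ₓ³u + 6u∂ₓu)·φ`; in particular if `u` solves KdV then `w`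
obeys the same evolution `∂ₜw = -4P(t)w` as `φ`, so the generalized eigenfunction
equation `L(t)φ = τφ` is propagated by the flow. -/
theorem lax_eigen_equation_persistence (u φ : ℝ → ℝ → ℝ)
    (hu : ContDiff ℝ (⊤ : ℕ∞) (fun q : ℝ × ℝ => u q.1 q.2))
    (hφ : ContDiff ℝ (⊤ : ℕ∞) (fun q : ℝ × ℝ => φ q.1 q.2)) (τ : ℝ)
    (hflow : ∀ t x : ℝ, deriv (fun s => φ s x) t = -4 * LaxPt u t (fun y => φ t y) x) :
    (∀ t x : ℝ,
      deriv (fun s => laxDefect u φ τ s x) t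
          + 4 * LaxPt u t (fun y => laxDefect u φ τ t y) x =
        (deriv (fun s => u s x) t + iteratedDeriv 3 (fun y => u t y) x
          + 6 * u t x * deriv (fun y => u t y) x) * φ t x) ∧
    ((∀ t x : ℝ,
        deriv (fun s => u s x) t + iteratedDeriv 3 (fun y => u t y) x
          + 6 * u t x * deriv (fun y => u t y) x = 0) →
      ∀ t x : ℝ,
        deriv (fun s => laxDefect u φ τ s x) t =
          -4 * LaxPt u t (fun y => laxDefect u φ τ t y) x) := by
  have cW : ContDiff ℝ (⊤ : ℕ∞) (Wfn u φ τ) :=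
    ((contDiff_pd _ (contDiff_pd _ hφ)).add (hu.mul hφ)).sub (contDiff_const.mul hφ)
  -- the flow equation in pd language
  have hfl : dT (fun q : ℝ × ℝ => φ q.1 q.2)
      = fun q => -4 * dX (dX (dX (fun q : ℝ × ℝ => φ q.1 q.2))) q
        - 3 * (dX (fun q : ℝ × ℝ => u q.1 q.2) q * φ q.1 q.2)
        - 6 * (u q.1 q.2 * dX (fun q : ℝ × ℝ => φ q.1 q.2) q) := by
    funext q
    obtain ⟨t, x⟩ := q
    have e1 : deriv (fun s => φ s x) t
        = dT (fun q : ℝ × ℝ => φ q.1 q.2) (t, x) := deriv_t hφ t x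
    have e2 : iteratedDeriv 3 (fun y => φ t y) x
        = dX (dX (dX (fun q : ℝ × ℝ => φ q.1 q.2))) (t, x) := iteratedDeriv_x hφ 3 t x
    have e3 : deriv (fun y => u t y * φ t y) x
        = dX (fun q : ℝ × ℝ => u q.1 q.2 * φ q.1 q.2) (t, x) := deriv_x (hu.mul hφ) t x
    have e4 : deriv (fun y => φ t y) x
        = dX (fun q : ℝ × ℝ => φ q.1 q.2) (t, x) := deriv_x hφ t x
    show dT (fun q : ℝ × ℝ => φ q.1 q.2) (t, x)
        = -4 * dX (dX (dX (fun q : ℝ × ℝ => φ q.1 q.2))) (t, x)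
          - 3 * (dX (fun q : ℝ × ℝ => u q.1 q.2) (t, x) * φ t x)
          - 6 * (u t x * dX (fun q : ℝ × ℝ => φ q.1 q.2) (t, x))
    rw [← e1, hflow t x]
    simp only [LaxPt]
    rw [e2, e3, e4,
      pd_mul (hu.differentiable (by simp)) (hφ.differentiable (by simp))]
    ring
  -- the defect equals Wfn
  have hdef : ∀ s y : ℝ, laxDefect u φ τ s y = Wfn u φ τ (s, y) := by
    intro s y
    have h2 : iteratedDeriv 2 (fun z => φ s z) y
        = dX (dX (fun q : ℝ × ℝ => φ q.1 q.2)) (s, y) := iteratedDeriv_x hφ 2 s y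
    unfold laxDefect Wfn
    rw [h2]
  have main : ∀ t x : ℝ,
      deriv (fun s => laxDefect u φ τ s x) t
          + 4 * LaxPt u t (fun y => laxDefect u φ τ t y) x =
        (deriv (fun s => u s x) t + iteratedDeriv 3 (fun y => u t y) x
          + 6 * u t x * deriv (fun y => u t y) x) * φ t x := by
    intro t x
    have eW : deriv (fun s => Wfn u φ τ (s, x)) t = dT (Wfn u φ τ) (t, x) := deriv_t cW t x
    have e5 : iteratedDeriv 3 (fun y => Wfn u φ τ (t, y)) x
        = dX (dX (dX (Wfn u φ τ))) (t, x) := iteratedDeriv_x cW 3 t x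
    have e6 : deriv (fun y => u t y * Wfn u φ τ (t, y)) x
        = dX (fun r : ℝ × ℝ => u r.1 r.2 * Wfn u φ τ r) (t, x) := deriv_x (hu.mul cW) t x
    have e7 : deriv (fun y => Wfn u φ τ (t, y)) x = dX (Wfn u φ τ) (t, x) := deriv_x cW t x
    have eU1 : deriv (fun s => u s x) t
        = dT (fun q : ℝ × ℝ => u q.1 q.2) (t, x) := deriv_t hu t x
    have eU2 : iteratedDeriv 3 (fun y => u t y) x
        = dX (dX (dX (fun q : ℝ × ℝ => u q.1 q.2))) (t, x) := iteratedDeriv_x hu 3 t x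
    have eU3 : deriv (fun y => u t y) x
        = dX (fun q : ℝ × ℝ => u q.1 q.2) (t, x) := deriv_x hu t x
    rw [show (fun s => laxDefect u φ τ s x) = (fun s => Wfn u φ τ (s, x)) from
          funext fun s => hdef s x,
        show (fun y => laxDefect u φ τ t y) = (fun y => Wfn u φ τ (t, y)) from
          funext fun y => hdef t y,
        eW]
    simp only [LaxPt]
    rw [e5, e6, e7, eU1, eU2, eU3]
    exact key hu hφ τ hfl (t, x)
  refine ⟨main, fun hkdv t x => ?_⟩
  have h1 := main t x
  rw [hkdv t x, zero_mul] at h1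
  linarith
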